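/- Let $(V,\mathrm{dist})$ be a metric space, let $S, L \subseteq V$ be finite nonempty sets of facilities. For a point $x$, write $\mathrm{dist}(x, T) = \min_{t \in T} \mathrm{dist}(x,t)$. Let $c \in V$ be a client, let $f \in S$ with $f = \arg\min_{g \in S}\mathrm{dist}(c,g)$, let $\ell = \arg\min_{m \in L}\mathrm{dist}(f, m)$, and let $f' \in S$ be the point of $S$ closest to $\ell$. Then $\mathrm{dist}(c, f') \le 3\,\mathrm{dist}(c, f) + 2\,\mathrm{dist}(c, L)$. -/
import Mathlib

/-- Reassignment bound (Lemma 4.1, Step 1): if `f` is the facility of `S`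
closest to client `c`, `ℓ` is the facility of `L` closest to `f`, and `f'` is
the facility of `S` closest to `ℓ`, then `dist(c,f') ≤ 3 dist(c,f) + 2 dist(c,L)`. -/
theorem reassignment_bound {V : Type*} [MetricSpace V]
    (S L : Finset V) (hL : L.Nonempty)
    (c f ℓ f' : V)
    (hf : f ∈ S) (hfmin : ∀ g ∈ S, dist c f ≤ dist c g)
    (hℓ : ℓ ∈ L) (hℓmin : ∀ m ∈ L, dist f ℓ ≤ dist f m)
    (hf' : f' ∈ S) (hf'min : ∀ g ∈ S, dist f' ℓ ≤ dist g ℓ) :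
    dist c f' ≤ 3 * dist c f + 2 * L.inf' hL (fun m => dist c m) := by
  obtain ⟨m₀, hm₀, heq⟩ := Finset.exists_mem_eq_inf' hL (fun m => dist c m)
  rw [heq]
  have h1 : dist c f' ≤ dist c f + dist f ℓ + dist ℓ f' := by
    calc dist c f' ≤ dist c ℓ + dist ℓ f' := dist_triangle _ _ _
    _ ≤ dist c f + dist f ℓ + dist ℓ f' := by
        have := dist_triangle c f ℓ; linarith
  have h2 : dist ℓ f' ≤ dist f ℓ := by
    rw [dist_comm]; exact hf'min f hf
  have h3 : dist f ℓ ≤ dist c f + dist c m₀ := by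
    calc dist f ℓ ≤ dist f m₀ := hℓmin m₀ hm₀
    _ ≤ dist f c + dist c m₀ := dist_triangle _ _ _
    _ = dist c f + dist c m₀ := by rw [dist_comm]
  linarith
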